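/- Let B be a C*-algebra. Then the set of maximally mixed functionals is a norm-closed subset of B*. -/

import Mathlib

open scoped ComplexOrder Pointwise

noncomputable section

variable (B : Type*) [NonUnitalCStarAlgebra B]

/-- `snd : Unitization ℂ B → B` as a continuous linear map. -/
def sndCLM : Unitization ℂ B →L[ℂ] B :=
  { Unitization.sndHom ℂ ℂ B with
    cont := continuous_snd.comp Unitization.uniformEquivProd.continuous }

/-- `inr : B → Unitization ℂ B` as a continuous linear map. -/
def inrCLM : B →L[ℂ] Unitization ℂ B :=
  { Unitization.inrHom ℂ ℂ B with cont := Unitization.continuous_inr }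

/-- The functional `uφv : x ↦ φ (u * x * v)` on `B`, for `u, v` in the minimal
unitization `B~ := Unitization ℂ B`.  The product `u * x * v` is computed in `B~`;
it lies in (the canonical image of) the ideal `B` there, and is evaluated by `φ`
via the projection `snd` onto `B`. -/
def conj2 (u v : Unitization ℂ B) (φ : B →L[ℂ] ℂ) : B →L[ℂ] ℂ :=
  ((φ.comp (sndCLM B)).comp
    (ContinuousLinearMap.mulLeftRight ℂ (Unitization ℂ B) u v)).comp (inrCLM B)

/-- The weak*-closure of a set of continuous linear functionals. -/
def wsClosureNU (S : Set (B →L[ℂ] ℂ)) : Set (B →L[ℂ] ℂ) :=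
  StrongDual.toWeakDual ⁻¹' closure (StrongDual.toWeakDual '' S)

/-- The Dixmier set `D_B(φ)` of a functional: the weak*-closed convex hull of the set
`{uφu* : u ∈ U(B~)}` of conjugates of `φ` by unitaries of the minimal unitization. -/
def DixNU (φ : B →L[ℂ] ℂ) : Set (B →L[ℂ] ℂ) :=
  wsClosureNU B (convexHull ℝ
    ((fun u : Unitization ℂ B => conj2 B u (star u) φ) ''
      (unitary (Unitization ℂ B) : Set (Unitization ℂ B))))

/-- A functional is maximally mixed if `φ ∈ D_B(ψ)` for every `ψ ∈ D_B(φ)`. -/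
def MaxMixedNU (φ : B →L[ℂ] ℂ) : Prop := ∀ ψ ∈ DixNU B φ, φ ∈ DixNU B ψ

/-- Positive functionals: `φ(x*x) ≥ 0` for all `x`. -/
def IsPosNU (φ : B →L[ℂ] ℂ) : Prop := ∀ x : B, 0 ≤ φ (star x * x)

/-!
Conjugation by a unitary of `B~` is isometric on `B*`, so `D_B(φ)` lies in the
`‖φ - φ'‖`-neighbourhood of `D_B(φ')`: this is clear for the conjugates themselves and
survives convex hulls and weak*-closures, because by Banach–Alaoglu a weak*-closed set plus a
closed ball is weak*-closed. Now let `φ'` be maximally mixed and close to `φ`, and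
`ψ ∈ D_B(φ)`. Then some `ψ' ∈ D_B(φ')` is close to `ψ`, and `φ' ∈ D_B(ψ')` is close to some
element of `D_B(ψ)`. So `φ` is in the norm closure of `D_B(ψ)`, which is `D_B(ψ)` itself.
-/

open Metric Set

theorem WeakDual.closure_subset_add_closedBall {𝕜 E : Type*} [NontriviallyNormedField 𝕜]
    [ProperSpace 𝕜] [SeminormedAddCommGroup E] [NormedSpace 𝕜 E] {s t : Set (WeakDual 𝕜 E)}
    {r : ℝ} (h : s ⊆ t + toStrongDual ⁻¹' closedBall 0 r) :
    closure s ⊆ closure t + toStrongDual ⁻¹' closedBall 0 r :=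
  closure_minimal (h.trans (add_subset_add_right subset_closure))
    (isClosed_closure.add_right_of_isCompact (WeakDual.isCompact_closedBall 0 r))

variable {B}

lemma conj2_apply (u v : Unitization ℂ B) (φ : B →L[ℂ] ℂ) (x : B) :
    conj2 B u v φ x = φ (u * x * v).snd :=
  rfl

lemma conj2_sub (u v : Unitization ℂ B) (φ ψ : B →L[ℂ] ℂ) :
    conj2 B u v (φ - ψ) = conj2 B u v φ - conj2 B u v ψ :=
  rfl

lemma norm_conj2_le {u : Unitization ℂ B} (hu : u ∈ unitary (Unitization ℂ B))
    (φ : B →L[ℂ] ℂ) : ‖conj2 B u (star u) φ‖ ≤ ‖φ‖ := by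
  refine (conj2 B u (star u) φ).opNorm_le_bound (norm_nonneg φ) fun x => ?_
  rw [conj2_apply]
  have h_inr : (((u * x * star u).snd : B) : Unitization ℂ B) = u * x * star u := by
    have h := Unitization.inl_fst_add_inr_snd_eq (u * (x : Unitization ℂ B) * star u)
    rwa [show (u * x * star u).fst = 0 by simp, Unitization.inl_zero, zero_add] at h
  calc ‖φ (u * x * star u).snd‖ ≤ ‖φ‖ * ‖(u * x * star u).snd‖ := φ.le_opNorm _
    _ = ‖φ‖ * ‖x‖ := by
      rw [← Unitization.norm_inr (𝕜 := ℂ), h_inr, mul_assoc, CStarRing.norm_mem_unitary_mul _ hu,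
        CStarRing.norm_mul_mem_unitary _ (Unitary.star_mem hu), Unitization.norm_inr]

lemma wsClosureNU_subset_add_closedBall {S T : Set (B →L[ℂ] ℂ)} {r : ℝ}
    (h : S ⊆ T + closedBall 0 r) : wsClosureNU B S ⊆ wsClosureNU B T + closedBall 0 r := by
  have h_weak : StrongDual.toWeakDual '' S ⊆
      StrongDual.toWeakDual '' T + WeakDual.toStrongDual ⁻¹' closedBall 0 r := by
    rw [← StrongDual.symm_toWeakDual, ← LinearEquiv.image_eq_preimage_symm, ← image_add]
    exact image_mono h
  intro φ hφ
  rw [wsClosureNU, mem_preimage] at hφ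
  obtain ⟨ψ, hψ, χ, hχ, hsum⟩ := WeakDual.closure_subset_add_closedBall h_weak hφ
  refine ⟨WeakDual.toStrongDual ψ, hψ, WeakDual.toStrongDual χ, hχ, ?_⟩
  simpa using congrArg WeakDual.toStrongDual hsum

lemma isClosed_dixNU (φ : B →L[ℂ] ℂ) : IsClosed (DixNU B φ) :=
  isClosed_closure.preimage NormedSpace.Dual.toWeakDual_continuous

lemma dixNU_subset_add_closedBall (φ φ' : B →L[ℂ] ℂ) :
    DixNU B φ ⊆ DixNU B φ' + closedBall 0 ‖φ - φ'‖ := by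
  refine wsClosureNU_subset_add_closedBall (convexHull_min ?_
    ((convex_convexHull ℝ _).add (convex_closedBall 0 _)))
  rintro _ ⟨u, hu, rfl⟩
  refine ⟨conj2 B u (star u) φ', subset_convexHull ℝ _ ⟨u, hu, rfl⟩,
    conj2 B u (star u) (φ - φ'), ?_, by rw [conj2_sub]; exact add_sub_cancel _ _⟩
  simpa using norm_conj2_le hu (φ - φ')

lemma exists_mem_dixNU_norm_sub_le {φ ψ : B →L[ℂ] ℂ} (hψ : ψ ∈ DixNU B φ) (φ' : B →L[ℂ] ℂ) :
    ∃ ψ' ∈ DixNU B φ', ‖ψ - ψ'‖ ≤ ‖φ - φ'‖ := by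
  obtain ⟨ψ', hψ', e, he, rfl⟩ := dixNU_subset_add_closedBall φ φ' hψ
  exact ⟨ψ', hψ', by simpa using he⟩

/-- For a C*-algebra `B`, the set of maximally mixed functionals is a
norm-closed subset of `B*` (the dual carries its norm topology by default). -/
theorem stmt3 (B : Type*) [NonUnitalCStarAlgebra B] :
    IsClosed {φ : B →L[ℂ] ℂ | MaxMixedNU B φ} := by
  refine isClosed_of_closure_subset fun φ hφ ψ hψ => (isClosed_dixNU ψ).closure_subset ?_
  refine Metric.mem_closure_iff.mpr fun ε hε => ?_
  obtain ⟨φ', hφ'_mixed, hφφ'⟩ := Metric.mem_closure_iff.mp hφ (ε / 2) (half_pos hε)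
  rw [dist_eq_norm] at hφφ'
  obtain ⟨ψ', hψ', hψψ'⟩ := exists_mem_dixNU_norm_sub_le hψ φ'
  obtain ⟨χ, hχ, hφ'χ⟩ := exists_mem_dixNU_norm_sub_le (hφ'_mixed ψ' hψ') ψ
  refine ⟨χ, hχ, ?_⟩
  calc dist φ χ ≤ ‖φ - φ'‖ + ‖φ' - χ‖ := by
        rw [dist_eq_norm]; exact norm_sub_le_norm_sub_add_norm_sub _ _ _
    _ ≤ ‖φ - φ'‖ + ‖ψ - ψ'‖ := by rw [norm_sub_rev ψ]; gcongr
    _ ≤ ‖φ - φ'‖ + ‖φ - φ'‖ := by gcongr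
    _ < ε := by linarith
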